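/- arXiv:1506.02930 — 4 statements merged into one kernel-verified Lean document; each statement's English description precedes it below -/
import Mathlib

section
/- (Solomonoff's theorem, sorted-order optimality) Let p, t : Fin n → ℝ with t_k > 0 and p_k ≥ 0 for all k, and suppose the indexing is already sorted so that p_0/t_0 ≥ p_1/t_1 ≥ ... ≥ p_{n-1}/t_{n-1}. Then for every permutation σ of Fin n, Σ_i p_i · (Σ_{j ≤ i} t_j) ≤ Σ_i p_{σ(i)} · (Σ_{j ≤ i} t_{σ(j)}). That is, testing candidates in decreasing order of p_k/t_k minimizes the expected time before a solution is found. -/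
open Finset

/-- Expected search cost of testing order `σ`. -/
def expCost {n : ℕ} (p t : Fin n → ℝ) (σ : Equiv.Perm (Fin n)) : ℝ :=
  ∑ i, p (σ i) * ∑ j ∈ Finset.Iic i, t (σ j)

private lemma expCost_eq {n : ℕ} (p t : Fin n → ℝ) (σ : Equiv.Perm (Fin n)) :
    expCost p t σ =
      ∑ q : Fin n × Fin n, (if σ.symm q.2 ≤ σ.symm q.1 then p q.1 * t q.2 else 0) := by
  have h1 : expCost p t σ =
      ∑ q : Fin n × Fin n, (if q.2 ≤ q.1 then p (σ q.1) * t (σ q.2) else 0) := by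
    rw [Fintype.sum_prod_type]
    unfold expCost
    refine Finset.sum_congr rfl fun i _ => ?_
    have hIic : Finset.Iic i = Finset.univ.filter (fun j => j ≤ i) := by
      ext j; simp
    rw [Finset.mul_sum, hIic, Finset.sum_filter]
  rw [h1, ← Equiv.sum_comp (σ.prodCongr σ)
    (fun q : Fin n × Fin n => if σ.symm q.2 ≤ σ.symm q.1 then p q.1 * t q.2 else 0)]
  refine Finset.sum_congr rfl fun q _ => ?_
  simp [Equiv.prodCongr_apply]

private lemma sum_pairs_split {n : ℕ} (G : Fin n × Fin n → ℝ) :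
    ∑ q : Fin n × Fin n, G q =
      (∑ a, G (a, a)) +
        ∑ q ∈ Finset.univ.filter (fun q : Fin n × Fin n => q.1 < q.2),
          (G q + G (q.2, q.1)) := by
  have hdiag : (∑ a, G (a, a)) =
      ∑ q ∈ Finset.univ.filter (fun q : Fin n × Fin n => q.1 = q.2), G q := by
    refine Finset.sum_nbij' (fun a => (a, a)) (fun q => q.1) ?_ ?_ ?_ ?_ ?_ <;>
      simp +contextual [Prod.ext_iff]
  have hswap : (∑ q ∈ Finset.univ.filter (fun q : Fin n × Fin n => q.1 < q.2), G (q.2, q.1)) =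
      ∑ q ∈ Finset.univ.filter (fun q : Fin n × Fin n => q.2 < q.1), G q := by
    refine Finset.sum_nbij' (fun q => (q.2, q.1)) (fun q => (q.2, q.1)) ?_ ?_ ?_ ?_ ?_ <;>
      simp +contextual [Prod.ext_iff]
  rw [Finset.sum_add_distrib, hswap, hdiag]
  rw [← Finset.sum_filter_add_sum_filter_not Finset.univ (fun q : Fin n × Fin n => q.1 = q.2) G]
  congr 1
  rw [← Finset.sum_filter_add_sum_filter_not
    (Finset.univ.filter (fun q : Fin n × Fin n => ¬ q.1 = q.2))
    (fun q : Fin n × Fin n => q.1 < q.2) G]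
  congr 1 <;> · congr 1; ext q; simp; omega

/-- Solomonoff's theorem: if candidates are indexed in decreasing order of
`p_k / t_k`, then the identity order minimizes the expected cost over all
permutations. -/
theorem solomonoff_sorted_optimal {n : ℕ} (p t : Fin n → ℝ)
    (ht : ∀ k, 0 < t k) (hp : ∀ k, 0 ≤ p k)
    (hsorted : ∀ i j : Fin n, i ≤ j → p j / t j ≤ p i / t i)
    (σ : Equiv.Perm (Fin n)) :
    (∑ i, p i * ∑ j ∈ Finset.Iic i, t j) ≤
      ∑ i, p (σ i) * ∑ j ∈ Finset.Iic i, t (σ j) := by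
  have key : expCost p t 1 ≤ expCost p t σ := by
    rw [expCost_eq p t 1, expCost_eq p t σ, sum_pairs_split, sum_pairs_split]
    refine add_le_add (le_of_eq (by simp)) (Finset.sum_le_sum fun q hq => ?_)
    · simp only [Finset.mem_filter] at hq
      obtain ⟨-, hlt⟩ := hq
      have hne : σ.symm q.1 ≠ σ.symm q.2 := fun h => absurd (σ.symm.injective h) hlt.ne
      have hmin : p q.2 * t q.1 ≤ p q.1 * t q.2 := by
        have := hsorted q.1 q.2 hlt.le
        rwa [div_le_div_iff₀ (ht q.2) (ht q.1)] at this
      simp only [Equiv.Perm.one_def, Equiv.refl_symm, Equiv.refl_apply]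
      simp only [not_le.mpr hlt, hlt.le, ↓reduceIte, zero_add]
      rcases le_or_gt (σ.symm q.2) (σ.symm q.1) with h | h
      · rw [if_pos h, if_neg (not_le.mpr (lt_of_le_of_ne h (Ne.symm hne)))]
        linarith
      · rw [if_neg (not_le.mpr h), if_pos h.le, zero_add]
  simpa [expCost] using key
end

section
/- (Two-block exchange) Let p, t : Fin n → ℝ with t_k > 0, p_k ≥ 0, and suppose indices a < b satisfy p_a·t_b < p_b·t_a (i.e., p_b/t_b > p_a/t_a). Then the ordering obtained from the identity by moving candidate b to immediately before candidate a strictly decreases the expected cost E, provided additionally that for all k with a ≤ k < b, p_k·t_b < p_b·t_k. -/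
/-- Two-block exchange: if `a < b`, `p_a·t_b < p_b·t_a`, and moreover
`p_k·t_b < p_b·t_k` for every `a ≤ k < b`, then the order that tests
`0,…,a-1, b, a, a+1,…,b-1, b+1,…,n-1` has strictly smaller expected cost
than the identity order. Here the new order is any permutation `σ` with
`σ a = b`, `σ i = i - 1` for `a < i ≤ b`, and `σ i = i` elsewhere. -/
theorem two_block_exchange {n : ℕ} (p t : Fin n → ℝ)
    (ht : ∀ k, 0 < t k) (hp : ∀ k, 0 ≤ p k)
    (a b : Fin n) (hab : a < b)
    (hratio : p a * t b < p b * t a)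
    (hmid : ∀ k : Fin n, a ≤ k → k < b → p k * t b < p b * t k)
    (σ : Equiv.Perm (Fin n))
    (hσa : σ a = b)
    (hσmid : ∀ i : Fin n, a < i → i ≤ b → (σ i : ℕ) = (i : ℕ) - 1)
    (hσout : ∀ i : Fin n, i < a ∨ b < i → σ i = i) :
    expCost p t σ < expCost p t 1 := by
  classical
  have hσinj : Function.Injective σ := σ.injective
  set f : Fin n → ℝ := fun i => p (σ i) * ∑ j ∈ Finset.Iic i, t (σ j) with hfdef
  set g : Fin n → ℝ := fun i => p i * ∑ j ∈ Finset.Iic i, t j with hgdef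
  have hEσ : expCost p t σ = ∑ i, f i := rfl
  have hE1 : expCost p t 1 = ∑ i, g i := by
    simp [expCost, hgdef]
  -- low indices: f = g
  have hlow : ∀ i : Fin n, i < a → f i = g i := by
    intro i hi
    simp only [hfdef, hgdef, hσout i (Or.inl hi)]
    congr 1
    refine Finset.sum_congr rfl fun j hj => ?_
    rw [hσout j (Or.inl (lt_of_le_of_lt (Finset.mem_Iic.mp hj) hi))]
  -- high indices: σ maps Iic i onto itself
  have hhigh_img : ∀ i : Fin n, b < i → (Finset.Iic i).image σ = Finset.Iic i := by
    intro i hi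
    apply Finset.eq_of_subset_of_card_le
    · intro x hx
      simp only [Finset.mem_image] at hx
      obtain ⟨j, hj, rfl⟩ := hx
      rw [Finset.mem_Iic] at hj ⊢
      rcases lt_or_ge j a with h | h
      · rw [hσout j (Or.inl h)]; exact hj
      rcases le_or_gt j b with h2 | h2
      · rcases eq_or_lt_of_le h with rfl | h3
        · rw [hσa]; exact le_of_lt hi
        · have hv := hσmid j h3 h2
          rw [Fin.le_def] at hj ⊢
          omega
      · rw [hσout j (Or.inr h2)]; exact hj
    · rw [Finset.card_image_of_injective _ hσinj]
  have hhigh : ∀ i : Fin n, b < i → f i = g i := by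
    intro i hi
    simp only [hfdef, hgdef, hσout i (Or.inr hi)]
    congr 1
    rw [← Finset.sum_image (fun x _ y _ h => hσinj h), hhigh_img i hi]
  -- middle: σ maps Iic i onto insert b (Iio i)
  have hmid_img : ∀ i : Fin n, a ≤ i → i ≤ b →
      (Finset.Iic i).image σ = insert b (Finset.Iio i) := by
    intro i hia hib
    apply Finset.eq_of_subset_of_card_le
    · intro x hx
      simp only [Finset.mem_image] at hx
      obtain ⟨j, hj, rfl⟩ := hx
      rw [Finset.mem_Iic] at hj
      simp only [Finset.mem_insert, Finset.mem_Iio]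
      rcases lt_or_ge j a with h | h
      · right; rw [hσout j (Or.inl h)]; exact lt_of_lt_of_le h hia
      rcases eq_or_lt_of_le h with rfl | h3
      · left; exact hσa
      · have hjb : j ≤ b := le_trans hj hib
        have hv := hσmid j h3 hjb
        right
        rw [Fin.lt_def]
        rw [Fin.le_def] at hj
        have hj0 : (0:ℕ) < (j:ℕ) := by
          have h3' := h3; rw [Fin.lt_def] at h3'; omega
        omega
    · rw [Finset.card_image_of_injective _ hσinj,
        Finset.card_insert_of_notMem (by simp only [Finset.mem_Iio, not_lt]; exact hib),
        Fin.card_Iic, Fin.card_Iio]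
  have hmid_sum : ∀ i : Fin n, a ≤ i → i ≤ b →
      (∑ j ∈ Finset.Iic i, t (σ j)) = t b + ∑ j ∈ Finset.Iio i, t j := by
    intro i hia hib
    rw [← Finset.sum_image (fun x _ y _ h => hσinj h), hmid_img i hia hib,
      Finset.sum_insert (by simp only [Finset.mem_Iio, not_lt]; exact hib)]
  -- σ maps Ioc a b onto Ico a b
  have hIoc_img : (Finset.Ioc a b).image σ = Finset.Ico a b := by
    apply Finset.eq_of_subset_of_card_le
    · intro x hx
      simp only [Finset.mem_image] at hx
      obtain ⟨j, hj, rfl⟩ := hx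
      rw [Finset.mem_Ioc] at hj
      have hv := hσmid j hj.1 hj.2
      rw [Finset.mem_Ico, Fin.le_def, Fin.lt_def]
      have h1 := hj.1; have h2 := hj.2
      rw [Fin.lt_def] at h1; rw [Fin.le_def] at h2
      omega
    · rw [Finset.card_image_of_injective _ hσinj, Fin.card_Ico, Fin.card_Ioc]
  -- for i in Ioc a b, Iio i = Iic (σ i)
  have hIio_eq : ∀ i : Fin n, a < i → i ≤ b → Finset.Iio i = Finset.Iic (σ i) := by
    intro i h1 h2
    have hv := hσmid i h1 h2
    have h1' := h1; rw [Fin.lt_def] at h1'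
    ext x
    simp only [Finset.mem_Iio, Finset.mem_Iic, Fin.lt_def, Fin.le_def, hv]
    omega
  -- sum over Ioc a b of f
  have hsum_Ioc : ∑ i ∈ Finset.Ioc a b, f i
      = ∑ k ∈ Finset.Ico a b, p k * (t b + ∑ j ∈ Finset.Iic k, t j) := by
    rw [← hIoc_img, Finset.sum_image (fun x _ y _ h => hσinj h)]
    refine Finset.sum_congr rfl fun i hi => ?_
    rw [Finset.mem_Ioc] at hi
    simp only [hfdef]
    rw [hmid_sum i (le_of_lt hi.1) hi.2, hIio_eq i hi.1 hi.2]
  -- reduce to Icc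
  have hdiff : expCost p t σ - expCost p t 1
      = ∑ i ∈ Finset.Icc a b, (f i - g i) := by
    rw [hEσ, hE1, ← Finset.sum_sub_distrib]
    refine (Finset.sum_subset (Finset.subset_univ _) fun i _ hi => ?_).symm
    rw [Finset.mem_Icc, not_and_or, not_le, not_le] at hi
    rcases hi with h | h
    · rw [hlow i h]; ring
    · rw [hhigh i h]; ring
  rw [Finset.sum_sub_distrib] at hdiff
  -- compute the two Icc sums
  have hfa : f a = p b * (t b + ∑ j ∈ Finset.Iio a, t j) := by
    simp only [hfdef]
    rw [hmid_sum a le_rfl (le_of_lt hab), hσa]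
  have hsum_f : ∑ i ∈ Finset.Icc a b, f i
      = p b * (t b + ∑ j ∈ Finset.Iio a, t j)
        + ∑ k ∈ Finset.Ico a b, p k * (t b + ∑ j ∈ Finset.Iic k, t j) := by
    rw [← Finset.Ioc_insert_left (le_of_lt hab),
      Finset.sum_insert (by simp), hfa, hsum_Ioc]
  have hsum_g : ∑ i ∈ Finset.Icc a b, g i
      = p b * ∑ j ∈ Finset.Iic b, t j
        + ∑ k ∈ Finset.Ico a b, p k * ∑ j ∈ Finset.Iic k, t j := by
    rw [← Finset.Ico_insert_right (le_of_lt hab),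
      Finset.sum_insert (by simp)]
  -- telescoping of t sums
  have hIiob : Finset.Iio b = Finset.Iio a ∪ Finset.Ico a b := by
    ext x
    simp only [Finset.mem_Iio, Finset.mem_union, Finset.mem_Ico, Fin.lt_def, Fin.le_def]
    have := hab; rw [Fin.lt_def] at this
    omega
  have hdisj : Disjoint (Finset.Iio a) (Finset.Ico a b) := by
    rw [Finset.disjoint_left]
    intro x hx hx'
    rw [Finset.mem_Iio] at hx
    rw [Finset.mem_Ico] at hx'
    exact absurd hx'.1 (not_le.mpr hx)
  have hT : ∑ j ∈ Finset.Iic b, t j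
      = t b + (∑ j ∈ Finset.Iio a, t j) + ∑ j ∈ Finset.Ico a b, t j := by
    rw [← Finset.Iio_insert b, Finset.sum_insert (by simp), hIiob,
      Finset.sum_union hdisj]
    ring
  -- final computation
  have hkey : expCost p t σ - expCost p t 1
      = ∑ k ∈ Finset.Ico a b, (p k * t b - p b * t k) := by
    have e1 : ∑ k ∈ Finset.Ico a b, p k * (t b + ∑ j ∈ Finset.Iic k, t j)
        = ∑ k ∈ Finset.Ico a b, p k * t b
          + ∑ k ∈ Finset.Ico a b, p k * ∑ j ∈ Finset.Iic k, t j := by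
      rw [← Finset.sum_add_distrib]
      exact Finset.sum_congr rfl fun k _ => by ring
    rw [hdiff, hsum_f, hsum_g, hT, e1, Finset.sum_sub_distrib, ← Finset.mul_sum]
    ring
  have hneg : ∑ k ∈ Finset.Ico a b, (p k * t b - p b * t k) < 0 := by
    refine Finset.sum_neg (fun k hk => ?_) ⟨a, Finset.mem_Ico.mpr ⟨le_rfl, hab⟩⟩
    rw [Finset.mem_Ico] at hk
    linarith [hmid k hk.1 hk.2]
  linarith [hkey, hneg]
end

section
/- (Transposition cost formula) For p, t : Fin n → ℝ and indices a < b in Fin n, letting τ be the transposition of positions a and b applied to the identity order, E(τ) - E(id) = (p_a·t_b - p_b·t_a) + (p_a - p_b)·(Σ_{j : a < j ∧ j < b} t_j) + (Σ_{i : a < i ∧ i < b} p_i)·(t_b - t_a). -/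
/-- Transposition cost formula: swapping positions `a < b` in the identity
order changes the cost by
`(p_a·t_b - p_b·t_a) + (p_a - p_b)·Σ_{a<j<b} t_j + (Σ_{a<i<b} p_i)·(t_b - t_a)`. -/
theorem transposition_cost {n : ℕ} (p t : Fin n → ℝ) (a b : Fin n) (hab : a < b) :
    expCost p t (Equiv.swap a b) - expCost p t 1 =
      (p a * t b - p b * t a)
        + (p a - p b) * (∑ j ∈ Finset.Ioo a b, t j)
        + (∑ i ∈ Finset.Ioo a b, p i) * (t b - t a) := by
  classical
  set σ := Equiv.swap a b with hσ
  have hne : a ≠ b := ne_of_lt hab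
  set D : Fin n → ℝ := fun i =>
    p (σ i) * (∑ j ∈ Finset.Iic i, t (σ j)) - p i * (∑ j ∈ Finset.Iic i, t j) with hD
  have hlt : ∀ i : Fin n, i < a → (∑ j ∈ Finset.Iic i, t (σ j)) = ∑ j ∈ Finset.Iic i, t j := by
    intro i hi
    refine Finset.sum_congr rfl fun j hj => ?_
    have hj' := Finset.mem_Iic.mp hj
    rw [hσ, Equiv.swap_apply_of_ne_of_ne (ne_of_lt (lt_of_le_of_lt hj' hi))
      (ne_of_lt (lt_of_le_of_lt hj' (hi.trans hab)))]
  have hmid : ∀ i : Fin n, a ≤ i → i < b →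
      (∑ j ∈ Finset.Iic i, t (σ j)) = ∑ j ∈ Finset.Iic i, t j - t a + t b := by
    intro i h1 h2
    have ha : a ∈ Finset.Iic i := Finset.mem_Iic.mpr h1
    rw [← Finset.add_sum_erase _ (fun j => t (σ j)) ha, ← Finset.add_sum_erase _ t ha]
    have : (∑ j ∈ (Finset.Iic i).erase a, t (σ j)) = ∑ j ∈ (Finset.Iic i).erase a, t j := by
      refine Finset.sum_congr rfl fun j hj => ?_
      have hja : j ≠ a := (Finset.mem_erase.mp hj).1
      have hjb : j ≠ b := ne_of_lt (lt_of_le_of_lt (Finset.mem_Iic.mp (Finset.mem_erase.mp hj).2) h2)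
      rw [hσ, Equiv.swap_apply_of_ne_of_ne hja hjb]
    rw [this, hσ, Equiv.swap_apply_left]
    ring
  have hge : ∀ i : Fin n, b ≤ i → (∑ j ∈ Finset.Iic i, t (σ j)) = ∑ j ∈ Finset.Iic i, t j := by
    intro i hi
    refine Finset.sum_equiv σ (fun j => ?_) (fun j _ => rfl)
    simp only [Finset.mem_Iic]
    by_cases hja : j = a
    · subst hja; simp [hσ, Equiv.swap_apply_left]
      constructor <;> intro _
      · exact hi
      · exact le_of_lt (lt_of_lt_of_le hab hi)
    · by_cases hjb : j = b
      · subst hjb; simp [hσ, Equiv.swap_apply_right]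
        constructor <;> intro _
        · exact le_of_lt (lt_of_lt_of_le hab hi)
        · exact hi
      · rw [hσ, Equiv.swap_apply_of_ne_of_ne hja hjb]
  have h1 : expCost p t σ - expCost p t 1 = ∑ i, D i := by
    unfold expCost
    rw [← Finset.sum_sub_distrib]
    simp [hD]
  have h2 : (∑ i, D i) = ∑ i ∈ Finset.Icc a b, D i := by
    refine (Finset.sum_subset (Finset.subset_univ _) fun i _ hi => ?_).symm
    rw [Finset.mem_Icc] at hi
    push_neg at hi
    by_cases hia : a ≤ i
    · -- then b < i
      have hbi : b < i := hi hia
      have hσi : σ i = i := by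
        rw [hσ, Equiv.swap_apply_of_ne_of_ne (ne_of_gt (lt_of_lt_of_le hab (le_of_lt hbi)))
          (ne_of_gt hbi)]
      simp [hD, hσi, hge i (le_of_lt hbi)]
    · push_neg at hia
      have hσi : σ i = i := by
        rw [hσ, Equiv.swap_apply_of_ne_of_ne (ne_of_lt hia) (ne_of_lt (hia.trans hab))]
      simp [hD, hσi, hlt i hia]
  have hbn : b ∉ Finset.Ioo a b := by simp
  have han : a ∉ insert b (Finset.Ioo a b) := by simp [hne, le_refl]
  have hmidD : (∑ i ∈ Finset.Ioo a b, D i) = (∑ i ∈ Finset.Ioo a b, p i) * (t b - t a) := by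
    rw [Finset.sum_mul]
    refine Finset.sum_congr rfl fun i hi => ?_
    rw [Finset.mem_Ioo] at hi
    have hσi : σ i = i := by
      rw [hσ, Equiv.swap_apply_of_ne_of_ne (ne_of_gt hi.1) (ne_of_lt hi.2)]
    simp only [hD, hσi, hmid i (le_of_lt hi.1) hi.2]
    ring
  have hS : (∑ j ∈ Finset.Iic b, t j)
      = (∑ j ∈ Finset.Iic a, t j) + ((∑ j ∈ Finset.Ioo a b, t j) + t b) := by
    have hsplit : Finset.Iic b = Finset.Iic a ∪ Finset.Ioc a b := by
      ext x
      simp only [Finset.mem_Iic, Finset.mem_union, Finset.mem_Ioc, Fin.le_def, Fin.lt_def]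
      have := hab
      rw [Fin.lt_def] at this
      omega
    have hdisj : Disjoint (Finset.Iic a) (Finset.Ioc a b) := by
      rw [Finset.disjoint_left]
      intro x hx hx'
      rw [Finset.mem_Iic] at hx
      rw [Finset.mem_Ioc] at hx'
      exact absurd hx (not_le_of_gt hx'.1)
    rw [hsplit, Finset.sum_union hdisj, ← Finset.Ioo_insert_right hab, Finset.sum_insert hbn]
    ring
  rw [h1, h2, ← Finset.Ioc_insert_left (le_of_lt hab), ← Finset.Ioo_insert_right hab,
    Finset.sum_insert han, Finset.sum_insert hbn, hmidD]
  have hDa : D a = p b * ((∑ j ∈ Finset.Iic a, t j) - t a + t b)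
      - p a * (∑ j ∈ Finset.Iic a, t j) := by
    simp [hD, hmid a le_rfl hab, hσ, Equiv.swap_apply_left]
    exact Or.inl (hmid a le_rfl hab)
  have hDb : D b = p a * (∑ j ∈ Finset.Iic b, t j) - p b * (∑ j ∈ Finset.Iic b, t j) := by
    simp [hD, hge b le_rfl, hσ, Equiv.swap_apply_right]
    exact Or.inl (hge b le_rfl)
  rw [hDa, hDb, hS]
  ring
end

section
/- (Strict optimality uniqueness) Let p, t : Fin n → ℝ with t_k > 0, p_k ≥ 0, and suppose all ratios p_k/t_k are pairwise distinct. Then the permutation sorting candidates in strictly decreasing order of p_k/t_k is the unique minimizer of E(σ) = Σ_i p_{σ(i)}·(Σ_{j ≤ i} t_{σ(j)}) over all permutations σ of Fin n. -/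
/-- Cost change under an adjacent swap. -/
lemma expCost_swap {n : ℕ} (p t : Fin n → ℝ) (τ : Equiv.Perm (Fin n))
    (i j : Fin n) (hij : (i : ℕ) + 1 = (j : ℕ)) :
    expCost p t (τ * Equiv.swap i j)
      = expCost p t τ + (p (τ i) * t (τ j) - p (τ j) * t (τ i)) := by
  have hilt : i < j := by
    rw [Fin.lt_iff_val_lt_val]; omega
  have hne : i ≠ j := ne_of_lt hilt
  set F : Fin n → ℝ := fun k => p (τ k) * ∑ m ∈ Finset.Iic k, t (τ m) with hF
  set F' : Fin n → ℝ := fun k =>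
    p (τ (Equiv.swap i j k)) * ∑ m ∈ Finset.Iic k, t (τ (Equiv.swap i j m)) with hF'
  have hiIio : i ∉ Finset.Iio i := by simp
  have hAi : ∑ m ∈ Finset.Iic i, t (τ m)
      = t (τ i) + ∑ m ∈ Finset.Iio i, t (τ m) := by
    rw [← Finset.Iio_insert, Finset.sum_insert hiIio]
  have hswapIio : ∀ m ∈ Finset.Iio i, t (τ (Equiv.swap i j m)) = t (τ m) := by
    intro m hm
    rw [Finset.mem_Iio] at hm
    rw [Equiv.swap_apply_of_ne_of_ne (ne_of_lt hm) (ne_of_lt (hm.trans hilt))]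
  have hAi' : ∑ m ∈ Finset.Iic i, t (τ (Equiv.swap i j m))
      = t (τ j) + ∑ m ∈ Finset.Iio i, t (τ m) := by
    rw [← Finset.Iio_insert, Finset.sum_insert hiIio, Equiv.swap_apply_left,
      Finset.sum_congr rfl hswapIio]
  have hIicj : Finset.Iic j = insert j (Finset.Iic i) := by
    ext m
    simp only [Finset.mem_Iic, Finset.mem_insert, Fin.le_iff_val_le_val]
    constructor
    · intro h
      rcases eq_or_lt_of_le h with h' | h'
      · exact Or.inl (Fin.ext (by omega))
      · right; omega
    · rintro (rfl | h)
      · exact le_refl _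
      · omega
  have hAj : ∑ m ∈ Finset.Iic j, t (τ m)
      = t (τ j) + (t (τ i) + ∑ m ∈ Finset.Iio i, t (τ m)) := by
    rw [hIicj, Finset.sum_insert (by simp [Finset.mem_Iic, not_le, hilt]), hAi]
  -- swap permutes Iic k when both i, j ≤ k
  have hinv : ∀ k : Fin n, j ≤ k →
      ∑ m ∈ Finset.Iic k, t (τ (Equiv.swap i j m)) = ∑ m ∈ Finset.Iic k, t (τ m) := by
    intro k hk
    refine Finset.sum_equiv (Equiv.swap i j) ?_ (fun m _ => rfl)
    intro m
    simp only [Finset.mem_Iic]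
    rcases eq_or_ne m i with rfl | hmi
    · simp [Equiv.swap_apply_left, hk, le_of_lt (lt_of_lt_of_le hilt hk)]
    rcases eq_or_ne m j with rfl | hmj
    · simp [Equiv.swap_apply_right, hk, le_of_lt (lt_of_lt_of_le hilt hk)]
    · rw [Equiv.swap_apply_of_ne_of_ne hmi hmj]
  have hzero : ∀ k : Fin n, k ≠ i → k ≠ j → F' k - F k = 0 := by
    intro k hki hkj
    have hcase : k < i ∨ j ≤ k := by
      rw [Fin.lt_iff_val_lt_val, Fin.le_iff_val_le_val]
      have h1 : (k : ℕ) ≠ (i : ℕ) := fun h => hki (Fin.ext h)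
      have h2 : (k : ℕ) ≠ (j : ℕ) := fun h => hkj (Fin.ext h)
      omega
    have hpk : τ (Equiv.swap i j k) = τ k := by
      rw [Equiv.swap_apply_of_ne_of_ne hki hkj]
    have hsum : ∑ m ∈ Finset.Iic k, t (τ (Equiv.swap i j m))
        = ∑ m ∈ Finset.Iic k, t (τ m) := by
      rcases hcase with h | h
      · refine Finset.sum_congr rfl fun m hm => ?_
        rw [Finset.mem_Iic] at hm
        have hmi : m < i := lt_of_le_of_lt hm h
        rw [Equiv.swap_apply_of_ne_of_ne (ne_of_lt hmi) (ne_of_lt (hmi.trans hilt))]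
      · exact hinv k h
    simp only [hF, hF', hpk, hsum, sub_self]
  have hdiff : expCost p t (τ * Equiv.swap i j) - expCost p t τ = ∑ k, (F' k - F k) := by
    have e1 : expCost p t (τ * Equiv.swap i j) = ∑ k, F' k :=
      Finset.sum_congr rfl fun k _ => by simp only [hF', Equiv.Perm.mul_apply]
    have e2 : expCost p t τ = ∑ k, F k := rfl
    rw [e1, e2, Finset.sum_sub_distrib]
  have hsum2 : ∑ k, (F' k - F k) = (F' i - F i) + (F' j - F j) :=
    Fintype.sum_eq_add i j hne fun k ⟨h1, h2⟩ => hzero k h1 h2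
  have hFi : F i = p (τ i) * (t (τ i) + ∑ m ∈ Finset.Iio i, t (τ m)) := by
    simp only [hF]; rw [hAi]
  have hF'i : F' i = p (τ j) * (t (τ j) + ∑ m ∈ Finset.Iio i, t (τ m)) := by
    simp only [hF']; rw [Equiv.swap_apply_left, hAi']
  have hFj : F j = p (τ j) * (t (τ j) + (t (τ i) + ∑ m ∈ Finset.Iio i, t (τ m))) := by
    simp only [hF]; rw [hAj]
  have hF'j : F' j = p (τ i) * (t (τ j) + (t (τ i) + ∑ m ∈ Finset.Iio i, t (τ m))) := by
    simp only [hF']; rw [Equiv.swap_apply_right, hinv j (le_refl j), hAj]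
  have : expCost p t (τ * Equiv.swap i j) - expCost p t τ
      = p (τ i) * t (τ j) - p (τ j) * t (τ i) := by
    rw [hdiff, hsum2, hFi, hF'i, hFj, hF'j]; ring
  linarith

/-- Two permutations strictly sorting the same pairwise-distinct ratios coincide. -/
lemma sorted_eq_sorted {n : ℕ} (p t : Fin n → ℝ)
    (hdistinct : ∀ k l : Fin n, k ≠ l → p k / t k ≠ p l / t l)
    (σ τ : Equiv.Perm (Fin n))
    (hσ : StrictAnti (fun i => p (σ i) / t (σ i)))
    (hτ : StrictAnti (fun i => p (τ i) / t (τ i))) : τ = σ := by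
  have hrange : Set.range (fun i => p (τ i) / t (τ i))
      = Set.range (fun i => p (σ i) / t (σ i)) := by
    have h1 : (fun i => p (τ i) / t (τ i)) = (fun k => p k / t k) ∘ τ := rfl
    have h2 : (fun i => p (σ i) / t (σ i)) = (fun k => p k / t k) ∘ σ := rfl
    rw [h1, h2, Set.range_comp, Set.range_comp, τ.surjective.range_eq, σ.surjective.range_eq]
  have heq := hτ.range_inj hσ |>.1 hrange
  refine Equiv.ext fun i => ?_
  by_contra hne
  exact hdistinct (τ i) (σ i) hne (congrFun heq i)

/-- Strict optimality uniqueness: if all ratios `p_k/t_k` are pairwise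
distinct, then the permutation sorting candidates in strictly decreasing
order of `p_k/t_k` is the unique minimizer of the expected cost. -/
theorem sorted_unique_minimizer {n : ℕ} (p t : Fin n → ℝ)
    (ht : ∀ k, 0 < t k) (hp : ∀ k, 0 ≤ p k)
    (hdistinct : ∀ k l : Fin n, k ≠ l → p k / t k ≠ p l / t l)
    (σ : Equiv.Perm (Fin n))
    (hsorted : ∀ i j : Fin n, i < j → p (σ j) / t (σ j) < p (σ i) / t (σ i)) :
    (∀ τ : Equiv.Perm (Fin n), expCost p t σ ≤ expCost p t τ) ∧
    (∀ τ : Equiv.Perm (Fin n), (∀ ρ, expCost p t τ ≤ expCost p t ρ) → τ = σ) := by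
  have hσanti : StrictAnti (fun i => p (σ i) / t (σ i)) := fun i j h => hsorted i j h
  -- any minimizer is strictly sorted
  have hmin_sorted : ∀ τ : Equiv.Perm (Fin n), (∀ ρ, expCost p t τ ≤ expCost p t ρ) →
      StrictAnti (fun i => p (τ i) / t (τ i)) := by
    intro τ hτ
    cases n with
    | zero => intro i; exact i.elim0
    | succ m =>
      rw [Fin.strictAnti_iff_succ_lt]
      intro i
      set a := i.castSucc
      set b := i.succ
      have hab : (a : ℕ) + 1 = (b : ℕ) := by simp [a, b]
      have habne : τ a ≠ τ b := by
        intro h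
        have := τ.injective h
        simp only [a, b] at this
        exact absurd this (Fin.castSucc_lt_succ : i.castSucc < i.succ).ne
      rcases lt_trichotomy (p (τ a) / t (τ a)) (p (τ b) / t (τ b)) with h | h | h
      · exfalso
        have hkey := expCost_swap p t τ a b hab
        have hlt : p (τ a) * t (τ b) < p (τ b) * t (τ a) := by
          rw [div_lt_div_iff₀ (ht (τ a)) (ht (τ b))] at h
          exact h
        have : expCost p t (τ * Equiv.swap a b) < expCost p t τ := by
          rw [hkey]; linarith
        exact absurd (hτ (τ * Equiv.swap a b)) (not_le.mpr this)
      · exact absurd h (hdistinct (τ a) (τ b) habne)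
      · exact h
  have huniq : ∀ τ : Equiv.Perm (Fin n), (∀ ρ, expCost p t τ ≤ expCost p t ρ) → τ = σ := by
    intro τ hτ
    exact sorted_eq_sorted p t hdistinct σ τ hσanti (hmin_sorted τ hτ)
  obtain ⟨τ₀, -, hτ₀⟩ := Finset.exists_min_image Finset.univ (expCost p t)
    ⟨1, Finset.mem_univ 1⟩
  have hτ₀min : ∀ ρ, expCost p t τ₀ ≤ expCost p t ρ := fun ρ => hτ₀ ρ (Finset.mem_univ ρ)
  have hτ₀eq : τ₀ = σ := huniq τ₀ hτ₀min
  subst hτ₀eq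
  exact ⟨hτ₀min, huniq⟩
end
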